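/- Let ψ be the digamma function, let ℓ > -2, 0 < s < 1 with s > -ℓ/2, and N ≥ 2 real. Then ∂H_ℓ/∂N (s,N) := (1/2)[ψ(N/2) - ψ((N-2s)/2) - ψ((N+2s)/4) + ψ((N-2s)/4)] < 0. -/

import Mathlib

/-!
Writing `D_s(x) = ψ(x + s) - ψ(x)`, the functional equation `ψ(x + 1) = ψ(x) + 1/x` gives
`D_s(x) = D_s(x + n) + ∑_{k<n} (1/(x + k) - 1/(x + k + s))`, and the monotonicity of `ψ` (convexity
of `log Γ`) squeezes `0 ≤ D_s(x + n) ≤ 1/(x + n)` for `0 ≤ s ≤ 1`. Hence `D_s(x)` is the sum of a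
series whose terms `s/((x + k)(x + k + s))` all strictly decrease in `x`, so `D_s` is strictly
decreasing. With `a = (N - 2s)/4 > 0` the claim is `D_s(2a) < D_s(a)`.
-/

/-- The digamma function `ψ(z) = Γ'(z)/Γ(z) = (log Γ)'(z)`. -/
noncomputable def digamma (z : ℝ) : ℝ := deriv (fun y : ℝ => Real.log (Real.Gamma y)) z

open Real Set Filter Topology

lemma hasDerivAt_log_Gamma {x : ℝ} (hx : 0 < x) :
    HasDerivAt (fun y : ℝ => log (Gamma y)) (digamma x) x := by
  have hΓ : DifferentiableAt ℝ Gamma x :=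
    differentiableAt_Gamma fun m hm => by linarith [hm ▸ hx, (Nat.cast_nonneg m : (0 : ℝ) ≤ m)]
  exact (hΓ.log (Gamma_pos_of_pos hx).ne').hasDerivAt

lemma digamma_add_one {x : ℝ} (hx : 0 < x) : digamma (x + 1) = digamma x + x⁻¹ := by
  have hshift : HasDerivAt (fun y : ℝ => log (Gamma (y + 1))) (digamma (x + 1)) x := by
    simpa using (hasDerivAt_log_Gamma (by linarith : 0 < x + 1)).comp_add_const x 1
  have hfeq : (fun y : ℝ => log (Gamma (y + 1))) =ᶠ[𝓝 x] fun y => log (Gamma y) + log y := by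
    filter_upwards [eventually_gt_nhds hx] with y hy
    rw [Gamma_add_one hy.ne', log_mul hy.ne' (Gamma_pos_of_pos hy).ne', add_comm]
  exact (hshift.congr_of_eventuallyEq hfeq.symm).unique
    ((hasDerivAt_log_Gamma hx).add (hasDerivAt_log hx.ne'))

lemma digamma_monotoneOn : MonotoneOn digamma (Ioi 0) :=
  convexOn_log_Gamma.monotoneOn_deriv fun _ hx => (hasDerivAt_log_Gamma hx).differentiableAt

section Difference

variable {s x : ℝ}

lemma digamma_add_sub_digamma_nonneg (hx : 0 < x) (hs : 0 ≤ s) :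
    0 ≤ digamma (x + s) - digamma x :=
  sub_nonneg.2 <| digamma_monotoneOn hx (by simp only [mem_Ioi]; linarith) (by linarith)

lemma digamma_add_sub_digamma_le_inv (hx : 0 < x) (hs0 : 0 ≤ s) (hs1 : s ≤ 1) :
    digamma (x + s) - digamma x ≤ x⁻¹ := by
  have hmono := digamma_monotoneOn (by simp only [mem_Ioi]; linarith : x + s ∈ Ioi 0)
    (by simp only [mem_Ioi]; linarith : x + 1 ∈ Ioi 0) (by linarith)
  linarith [digamma_add_one hx]

lemma tendsto_digamma_add_sub_digamma_atTop (hx : 0 < x) (hs0 : 0 ≤ s) (hs1 : s ≤ 1) :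
    Tendsto (fun n : ℕ => digamma (x + n + s) - digamma (x + n)) atTop (𝓝 0) := by
  have hxn : ∀ n : ℕ, 0 < x + n := fun n => by positivity
  refine tendsto_of_tendsto_of_tendsto_of_le_of_le tendsto_const_nhds
    (tendsto_inv_atTop_zero.comp (tendsto_atTop_add_const_left _ x tendsto_natCast_atTop_atTop))
    (fun n => digamma_add_sub_digamma_nonneg (hxn n) hs0)
    (fun n => digamma_add_sub_digamma_le_inv (hxn n) hs0 hs1)

lemma digamma_add_sub_digamma_add_one (hx : 0 < x) (hs : 0 ≤ s) :
    digamma (x + 1 + s) - digamma (x + 1) = digamma (x + s) - digamma x - (x⁻¹ - (x + s)⁻¹) := by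
  rw [add_right_comm, digamma_add_one (by linarith), digamma_add_one hx]
  ring

lemma sum_range_inv_sub_inv_eq (hx : 0 < x) (hs : 0 ≤ s) (n : ℕ) :
    ∑ k ∈ Finset.range n, ((x + k)⁻¹ - (x + k + s)⁻¹) =
      (digamma (x + s) - digamma x) - (digamma (x + n + s) - digamma (x + n)) := by
  induction n with
  | zero => simp
  | succ n ih =>
    rw [Finset.sum_range_succ, ih, Nat.cast_succ, ← add_assoc,
      digamma_add_sub_digamma_add_one (by positivity) hs]
    ring

lemma hasSum_inv_sub_inv (hx : 0 < x) (hs0 : 0 ≤ s) (hs1 : s ≤ 1) :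
    HasSum (fun k : ℕ => (x + k)⁻¹ - (x + k + s)⁻¹) (digamma (x + s) - digamma x) := by
  refine (hasSum_iff_tendsto_nat_of_nonneg (fun k => ?_) _).2 ?_
  · exact sub_nonneg.2 <| inv_anti₀ (by positivity) (by linarith)
  · simpa [sum_range_inv_sub_inv_eq hx hs0] using
      (tendsto_digamma_add_sub_digamma_atTop hx hs0 hs1).const_sub (digamma (x + s) - digamma x)

end Difference

lemma inv_sub_inv_add_lt {a b s : ℝ} (ha : 0 < a) (hab : a < b) (hs : 0 < s) :
    b⁻¹ - (b + s)⁻¹ < a⁻¹ - (a + s)⁻¹ := by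
  have hb : 0 < b := ha.trans hab
  rw [inv_sub_inv hb.ne' (by positivity), inv_sub_inv ha.ne' (by positivity)]
  simp only [add_sub_cancel_left]
  exact div_lt_div_of_pos_left hs (by positivity) (by nlinarith)

lemma digamma_add_sub_digamma_strictAntiOn {s : ℝ} (hs0 : 0 < s) (hs1 : s ≤ 1) :
    StrictAntiOn (fun x => digamma (x + s) - digamma x) (Ioi 0) := by
  intro a (ha : 0 < a) b (hb : 0 < b) hab
  have hterm (k : ℕ) : (b + k)⁻¹ - (b + k + s)⁻¹ < (a + k)⁻¹ - (a + k + s)⁻¹ :=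
    inv_sub_inv_add_lt (by positivity) (by linarith) hs0
  exact hasSum_lt (fun k => (hterm k).le) (hterm 0)
    (hasSum_inv_sub_inv hb hs0.le hs1) (hasSum_inv_sub_inv ha hs0.le hs1)

theorem partial_H_N_neg_general (s N : ℝ) (hs0 : 0 < s) (hs1 : s < 1) (hN : 2 ≤ N) :
    (1 / 2) * (digamma (N / 2) - digamma ((N - 2 * s) / 2) - digamma ((N + 2 * s) / 4)
      + digamma ((N - 2 * s) / 4)) < 0 := by
  set a := (N - 2 * s) / 4 with ha_def
  have ha : 0 < a := by linarith
  have hlt : digamma (2 * a + s) - digamma (2 * a) < digamma (a + s) - digamma a :=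
    digamma_add_sub_digamma_strictAntiOn hs0 hs1.le ha (by simp only [mem_Ioi]; linarith)
      (by linarith)
  have e1 : 2 * a + s = N / 2 := by rw [ha_def]; ring
  have e2 : 2 * a = (N - 2 * s) / 2 := by rw [ha_def]; ring
  have e3 : a + s = (N + 2 * s) / 4 := by rw [ha_def]; ring
  rw [e1, e2, e3] at hlt
  linarith

theorem partial_H_N_neg (ℓ s N : ℝ) (hℓ : -2 < ℓ) (hs0 : 0 < s) (hs1 : s < 1)
    (hsℓ : -ℓ / 2 < s) (hN : 2 ≤ N) :
    (1 / 2) * (digamma (N / 2) - digamma ((N - 2 * s) / 2) - digamma ((N + 2 * s) / 4)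
      + digamma ((N - 2 * s) / 4)) < 0 :=
  partial_H_N_neg_general s N hs0 hs1 hN
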